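/- arXiv:2604.26415 — 3 statements merged into one kernel-verified Lean document; each statement's English description precedes it below -/
import Mathlib

section
/- Let A = (a, (u+1)*a + d, (4u+1)*a + 4d, (17u+1)*a + 17d), where d is a positive integer, gcd(a, d) = 1, u ≥ 3, and a ≥ 2. Let p be a positive divisor of a with p ≠ a. Then the Frobenius number of the quotient is F(⟨A⟩/p) = (a/p) * (⌊(a−p)/17⌋ + u*a + d + φ_2((a−p) mod 17)) − (u*a + d), where φ_2(0), φ_2(1), ..., φ_2(16) equal −1, 0, 1, 2, 0, 1, 2, 3, 1, 2, 3, 4, 2, 3, 4, 5, 3 respectively. -/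
/-!
Put `g k = (k u + 1) a + k d` for `k ∈ {1, 4, 17}`. An element `x a + Σ y_k g_k` of `⟨A⟩` equals
`M a + N d` with `N = Σ k y_k` and `M = x + u N + Σ y_k`, and `Σ y_k` is at least the greedy number
`c N` of coins of values 1, 4, 17 making up `N`. Hence `⟨A⟩ = {f N + j a}` with
`f N = (u N + c N) a + N d`, and `f` is monotone because `c N ≤ c (N + 1) + 3 ≤ c (N + 1) + u`.

Write `a = p q`. Given `n`, choose `m < q` with `m d ≡ n [MOD q]`; then `p n ∈ ⟨A⟩` iff
`n ≥ f (p m) / p`. By monotonicity the largest threshold is at `m = q - 1`, i.e. `N = a - p`,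
so `F(⟨A⟩/p) = f (a - p) / p - q`; the table `φ₂` enters through
`c N = ⌊N / 17⌋ + φ₂ (N % 17) + 1`.
-/

-- The greedy count of coins of values 1, 4, 17 making up `N`; it is minimal by `minCoins_le`.
def minCoins (N : ℕ) : ℕ := N / 17 + N % 17 / 4 + N % 17 % 4

theorem minCoins_add_four_le (N : ℕ) : minCoins (N + 4) ≤ minCoins N + 1 := by
  unfold minCoins
  by_cases h : N % 17 < 13 <;> omega

theorem minCoins_add_seventeen_le (N : ℕ) : minCoins (N + 17) ≤ minCoins N + 1 := by
  unfold minCoins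
  omega

theorem minCoins_add_mul_le {k : ℕ} (hk : ∀ N, minCoins (N + k) ≤ minCoins N + 1) (N t : ℕ) :
    minCoins (N + k * t) ≤ minCoins N + t := by
  induction t with
  | zero => simp
  | succ t ih =>
    rw [Nat.mul_succ, ← Nat.add_assoc]
    exact (hk _).trans (by omega)

theorem minCoins_le (y v w : ℕ) : minCoins (y + 4 * v + 17 * w) ≤ y + v + w :=
  calc minCoins (y + 4 * v + 17 * w)
      ≤ minCoins (y + 4 * v) + w := minCoins_add_mul_le minCoins_add_seventeen_le _ w
    _ ≤ minCoins y + v + w := Nat.add_le_add_right (minCoins_add_mul_le minCoins_add_four_le y v) w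
    _ ≤ y + v + w := by unfold minCoins; omega

theorem exists_coins_eq_minCoins (N : ℕ) :
    ∃ y v w, y + 4 * v + 17 * w = N ∧ y + v + w = minCoins N :=
  ⟨N % 17 % 4, N % 17 / 4, N / 17, by omega, by unfold minCoins; omega⟩

theorem minCoins_le_minCoins_add_one (N : ℕ) : minCoins N ≤ minCoins (N + 1) + 3 := by
  unfold minCoins
  by_cases h : N % 17 = 16 <;> omega

theorem minCoins_pos {N : ℕ} (hN : 0 < N) : 0 < minCoins N := by
  unfold minCoins
  omega

theorem minCoins_eq_getD (N : ℕ) :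
    (minCoins N : ℤ) = (N / 17 : ℕ) +
      [(-1 : ℤ), 0, 1, 2, 0, 1, 2, 3, 1, 2, 3, 4, 2, 3, 4, 5, 3].getD (N % 17) 0 + 1 := by
  have hr : N % 17 < 17 := Nat.mod_lt _ (by norm_num)
  unfold minCoins
  generalize N % 17 = r at hr ⊢
  interval_cases r <;> norm_num <;> ring

def semigroupA (a u d : ℕ) : Set ℕ :=
  {s | ∃ x y v w : ℕ, s = x * a + y * ((u + 1) * a + d) + v * ((4 * u + 1) * a + 4 * d) +
    w * ((17 * u + 1) * a + 17 * d)}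

-- For `3 ≤ u` and `a` coprime to `d`, the values at `N < a` form the Apéry set of
-- `semigroupA a u d` with respect to `a` (by `mem_semigroupA_iff` and `aperyElt_monotone`).
def aperyElt (a u d N : ℕ) : ℕ := (u * N + minCoins N) * a + N * d

theorem mem_semigroupA_iff {a u d s : ℕ} :
    s ∈ semigroupA a u d ↔ ∃ N j, s = aperyElt a u d N + j * a := by
  constructor
  · rintro ⟨x, y, v, w, rfl⟩
    obtain ⟨e, he⟩ := Nat.exists_eq_add_of_le (minCoins_le y v w)
    refine ⟨y + 4 * v + 17 * w, x + e, ?_⟩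
    unfold aperyElt
    linear_combination a * he
  · rintro ⟨N, j, rfl⟩
    obtain ⟨y, v, w, rfl, hc⟩ := exists_coins_eq_minCoins N
    refine ⟨j, y, v, w, ?_⟩
    unfold aperyElt
    rw [← hc]
    ring

theorem aperyElt_modEq (a u d N : ℕ) : aperyElt a u d N ≡ N * d [MOD a] := by
  unfold aperyElt
  simp [Nat.ModEq, Nat.add_comm, Nat.add_mul_mod_self_right]

theorem aperyElt_monotone {a u d : ℕ} (hu : 3 ≤ u) : Monotone (aperyElt a u d) := by
  refine monotone_nat_of_le_succ fun N ↦ ?_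
  have hc := Nat.mul_le_mul_right a (minCoins_le_minCoins_add_one N)
  have hua := Nat.mul_le_mul_right a hu
  unfold aperyElt
  nlinarith

theorem exists_lt_mul_modEq {q d : ℕ} (hq : 0 < q) (hd : d.Coprime q) (n : ℕ) :
    ∃ m < q, m * d ≡ n [MOD q] := by
  have : NeZero q := ⟨hq.ne'⟩
  refine ⟨((n : ZMod q) * (d : ZMod q)⁻¹).val, ZMod.val_lt _, ?_⟩
  rw [← ZMod.natCast_eq_natCast_iff]
  push_cast [ZMod.natCast_val, ZMod.cast_id]
  rw [mul_assoc, ZMod.inv_mul_of_unit _ ((ZMod.isUnit_iff_coprime d q).mpr hd), mul_one]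

-- The Frobenius number of `⟨A⟩ / p` when `a = p * q`.
def quotFrobenius (a u d p q : ℕ) : ℕ := (q - 1) * (u * a + d) + (minCoins (a - p) - 1) * q

section Quotient

variable {a u d p q : ℕ}

theorem quotFrobenius_cast_eq (hq : 1 ≤ q) (hpa : p < a) :
    (quotFrobenius a u d p q : ℤ) = q * ((((a - p) / 17 : ℕ) : ℤ) + u * a + d +
      [(-1 : ℤ), 0, 1, 2, 0, 1, 2, 3, 1, 2, 3, 4, 2, 3, 4, 5, 3].getD ((a - p) % 17) 0) -
      ((u : ℤ) * a + d) := by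
  unfold quotFrobenius
  push_cast [Nat.cast_sub hq, Nat.cast_sub (minCoins_pos (Nat.sub_pos_of_lt hpa)),
    minCoins_eq_getD]
  ring

theorem mul_quotFrobenius_add_eq_aperyElt (hpq : a = p * q) (hp : 0 < p) (hq : 2 ≤ q) :
    p * quotFrobenius a u d p q + a = aperyElt a u d (a - p) := by
  obtain ⟨r, rfl⟩ := Nat.exists_eq_add_one_of_ne_zero (show q ≠ 0 by omega)
  have hap : a - p = p * r := by rw [hpq]; ring_nf; omega
  obtain ⟨c, hc⟩ := Nat.exists_eq_add_one_of_ne_zero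
    (minCoins_pos (show 0 < a - p by rw [hap]; exact Nat.mul_pos hp (by omega))).ne'
  unfold quotFrobenius aperyElt
  rw [hc, hap, Nat.add_sub_cancel, Nat.add_sub_cancel, hpq]
  ring

theorem mul_quotFrobenius_not_mem (hu : 3 ≤ u) (had : a.Coprime d) (hpq : a = p * q)
    (hp : 0 < p) (hq : 2 ≤ q) : p * quotFrobenius a u d p q ∉ semigroupA a u d := by
  rw [mem_semigroupA_iff]
  rintro ⟨N, j, hN⟩
  have hpa : p < a := hpq ▸ (Nat.lt_mul_iff_one_lt_right hp).mpr hq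
  have hF := mul_quotFrobenius_add_eq_aperyElt (u := u) (d := d) hpq hp hq
  have hmod : N * d ≡ (a - p) * d [MOD a] :=
    calc N * d ≡ aperyElt a u d N + j * a [MOD a] := by
          simpa [Nat.ModEq] using (aperyElt_modEq a u d N).symm
      _ ≡ p * quotFrobenius a u d p q + a [MOD a] := by rw [hN]; simp [Nat.ModEq]
      _ ≡ (a - p) * d [MOD a] := hF ▸ aperyElt_modEq a u d (a - p)
  have hNa : a - p ≤ N :=
    calc a - p = (a - p) % a := (Nat.mod_eq_of_lt (by omega)).symm
      _ = N % a := (Nat.ModEq.cancel_right_of_coprime had hmod).symm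
      _ ≤ N := Nat.mod_le _ _
  have := aperyElt_monotone (a := a) (d := d) hu hNa
  omega

theorem mul_mem_of_quotFrobenius_lt {n : ℕ} (hu : 3 ≤ u) (had : a.Coprime d) (hpq : a = p * q)
    (hp : 0 < p) (hq : 2 ≤ q) (hn : quotFrobenius a u d p q < n) :
    p * n ∈ semigroupA a u d := by
  obtain ⟨m, hmq, hm⟩ := exists_lt_mul_modEq (q := q) (by omega)
    (Nat.Coprime.coprime_dvd_left (Dvd.intro_left p hpq.symm) had).symm n
  set B := (u * (p * m) + minCoins (p * m)) * q + m * d with hB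
  have hpB : p * B = aperyElt a u d (p * m) := by rw [hpq]; unfold aperyElt; ring
  have hBn : B ≡ n [MOD q] := (show B ≡ m * d [MOD q] by simp [hB, Nat.ModEq]).trans hm
  have hBlt : B < n + q := by
    have hpm : p * m ≤ a - p := by
      rw [hpq, ← Nat.mul_sub_one]; exact Nat.mul_le_mul_left p (by omega)
    have : p * B ≤ p * (quotFrobenius a u d p q + q) := by
      rw [hpB, mul_add, ← hpq, mul_quotFrobenius_add_eq_aperyElt hpq hp hq]
      exact aperyElt_monotone hu hpm
    have := Nat.le_of_mul_le_mul_left this hp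
    omega
  have hBle : B ≤ n := hBn.le_of_lt_add hBlt
  obtain ⟨j, hj⟩ := (Nat.modEq_iff_dvd' hBle).mp hBn
  rw [mem_semigroupA_iff]
  refine ⟨p * m, j, ?_⟩
  rw [← hpB, hpq, show n = B + q * j by omega]
  ring

end Quotient

theorem stmt_11_general (a u d p : ℕ)
    (ha : 2 ≤ a) (hu : 3 ≤ u)
    (hgcd : Nat.gcd a d = 1)
    (hpa : p ∣ a) (hpne : p ≠ a) :
    IsGreatest {z : ℤ | ¬ ∃ n : ℕ, (n : ℤ) = z ∧ ∃ x y v w : ℕ,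
        p * n = x * a + y * ((u + 1) * a + d) + v * ((4 * u + 1) * a + 4 * d) +
          w * ((17 * u + 1) * a + 17 * d)}
      (((a / p : ℕ) : ℤ) * ((((a - p) / 17 : ℕ) : ℤ) + u * a + d +
          [(-1 : ℤ), 0, 1, 2, 0, 1, 2, 3, 1, 2, 3, 4, 2, 3, 4, 5, 3].getD ((a - p) % 17) 0)
        - ((u : ℤ) * a + d)) := by
  obtain ⟨q, hpq⟩ := hpa
  have hp : 0 < p := Nat.pos_of_ne_zero (by rintro rfl; simp at hpq; omega)
  have hq : 2 ≤ q := by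
    by_contra! h
    interval_cases q <;> simp_all
  rw [hpq, Nat.mul_div_cancel_left q hp, ← hpq, ← quotFrobenius_cast_eq (by omega)
    (hpq ▸ (Nat.lt_mul_iff_one_lt_right hp).mpr hq)]
  refine ⟨fun ⟨n, hn, hmem⟩ ↦ ?_, fun z hz ↦ ?_⟩
  · rw [Nat.cast_inj] at hn
    exact mul_quotFrobenius_not_mem hu hgcd hpq hp hq (hn ▸ hmem)
  · by_contra! hlt
    lift z to ℕ using (Nat.cast_nonneg _).trans hlt.le
    exact hz ⟨z, rfl, mul_mem_of_quotFrobenius_lt hu hgcd hpq hp hq (by exact_mod_cast hlt)⟩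

/-- For `A = (a, (u+1)a + d, (4u+1)a + 4d, (17u+1)a + 17d)` with `d ≥ 1`,
`gcd(a,d) = 1`, `u ≥ 3`, `a ≥ 2`, and `p` a positive divisor of `a`, `p ≠ a`:
`F(⟨A⟩/p) = (a/p)·(⌊(a−p)/17⌋ + u·a + d + φ₂((a−p) mod 17)) − (u·a + d)`,
where `(φ₂(0),…,φ₂(16)) = (−1,0,1,2,0,1,2,3,1,2,3,4,2,3,4,5,3)`. -/
theorem stmt_11 (a u d p : ℕ)
    (ha : 2 ≤ a) (hd : 1 ≤ d) (hu : 3 ≤ u)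
    (hgcd : Nat.gcd a d = 1)
    (hp : 0 < p) (hpa : p ∣ a) (hpne : p ≠ a) :
    IsGreatest {z : ℤ | ¬ ∃ n : ℕ, (n : ℤ) = z ∧ ∃ x y v w : ℕ,
        p * n = x * a + y * ((u + 1) * a + d) + v * ((4 * u + 1) * a + 4 * d) +
          w * ((17 * u + 1) * a + 17 * d)}
      (((a / p : ℕ) : ℤ) * ((((a - p) / 17 : ℕ) : ℤ) + u * a + d +
          [(-1 : ℤ), 0, 1, 2, 0, 1, 2, 3, 1, 2, 3, 4, 2, 3, 4, 5, 3].getD ((a - p) % 17) 0)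
        - ((u : ℤ) * a + d)) :=
  stmt_11_general a u d p ha hu hgcd hpa hpne
end

section
/- Let ⟨A⟩ be a CNS numerical semigroup with parameters a ≥ 2, k ≥ 2, b ≥ 2, and positive integer d with gcd(a,d) = 1, and let p be a positive divisor of a with p ≠ a. Let X(a−p) = (x_1, ..., x_k) be the greedy presentation of a − p with respect to B = (1, b+1, b²+b+1, ..., (b^k−1)/(b−1)). If a ≥ k − 1 − (d−1)/(b−1), then the Frobenius number of the quotient is F(⟨A⟩/p) = (Σ_{i=1}^k x_i) * (a/p) + (a/p − 1)*((b−1)*a + d) − a/p. -/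
/-- `repunit b i = 1 + b + ⋯ + b^(i-1) = (b^i − 1)/(b − 1)`. -/
def repunit (b i : ℕ) : ℕ := ∑ j ∈ Finset.range i, b ^ j

/-!
Write `c = (b - 1) a + d` and `rᵢ = repunit b i`. Each generator is `bⁱ a + rᵢ d = a + rᵢ c`, so
`⟨A⟩` consists of the `M a + T c` such that `T` is a sum of at most `M` of the repunits
`r₁, …, r_k`. Greedy presentations are optimal for repunits, so this condition reads
`G(T) ≤ M` with `G = greedyCount b k` the greedy digit sum. Since `p ∣ a = p q` and `gcd(p, c) = 1`, we get
`n ∈ ⟨A⟩/p` iff `n = M q + t c` with `G(p t) ≤ M`. As `gcd(q, c) = 1`, the Apéry set of `q` in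
`⟨A⟩/p` is `{q G(p t) + t c : t < q}`. Lowering the argument of `G` by one raises `G` by at most
`b - 1`, and `(b - 1) a ≤ c`, so the maximum is at `t = q - 1`, where `G(p (q - 1)) = G(a - p)`
is `∑ xᵢ`. The Frobenius number is this maximum minus `q`.
-/

open Finset

lemma repunit_one (b : ℕ) : repunit b 1 = 1 := by simp [repunit]

lemma repunit_succ (b i : ℕ) : repunit b (i + 1) = b * repunit b i + 1 := geom_sum_succ

lemma repunit_add_pow (b i : ℕ) : repunit b i + b ^ i = repunit b (i + 1) := by
  rw [repunit, repunit, geom_sum_succ', add_comm]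

lemma repunit_pos (b : ℕ) {i : ℕ} (hi : 1 ≤ i) : 0 < repunit b i := by
  obtain ⟨j, rfl⟩ := Nat.exists_eq_add_of_le' hi
  rw [repunit_succ]
  omega

lemma sub_one_mul_repunit_add_one {b : ℕ} (hb : 1 ≤ b) (i : ℕ) :
    (b - 1) * repunit b i + 1 = b ^ i := by
  obtain ⟨c, rfl⟩ := Nat.exists_eq_add_of_le' hb
  rw [Nat.add_sub_cancel, mul_comm]
  exact geom_sum_mul_add c i

/-- The digit sum `∑ xᵢ` of the greedy presentation `X(T)` of `T` with respect to
`(repunit b 1, …, repunit b k)`. -/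
def greedyCount (b : ℕ) : ℕ → ℕ → ℕ
  | 0, T => T
  | k + 1, T => T / repunit b (k + 1) + greedyCount b k (T % repunit b (k + 1))

section greedyCount

variable {b : ℕ}

lemma greedyCount_one (T : ℕ) : greedyCount b 1 T = T := by
  simp [greedyCount, repunit_one, Nat.mod_one]

@[simp]
lemma greedyCount_zero_right (k : ℕ) : greedyCount b k 0 = 0 := by
  induction k with
  | zero => rfl
  | succ n ih => simp [greedyCount, ih]

lemma greedyCount_succ_mul_add {n s t : ℕ} (ht : t < repunit b (n + 1)) :
    greedyCount b (n + 1) (repunit b (n + 1) * s + t) = s + greedyCount b n t := by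
  simp only [greedyCount, Nat.mul_add_div (repunit_pos b (Nat.le_add_left 1 n)), Nat.mul_add_mod,
    Nat.div_eq_of_lt ht, Nat.mod_eq_of_lt ht, add_zero]

lemma greedyCount_succ_of_lt {n t : ℕ} (ht : t < repunit b (n + 1)) :
    greedyCount b (n + 1) t = greedyCount b n t := by
  simpa using greedyCount_succ_mul_add (s := 0) ht

lemma greedyCount_add_repunit_mul (n T y : ℕ) :
    greedyCount b (n + 1) (T + repunit b (n + 1) * y) = greedyCount b (n + 1) T + y := by
  have hr : 0 < repunit b (n + 1) := repunit_pos b (Nat.le_add_left 1 n)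
  simp only [greedyCount, Nat.add_mul_div_left _ _ hr, Nat.add_mul_mod_self_left]
  omega

lemma greedyCount_mul_repunit {k : ℕ} (hk : 1 ≤ k) : greedyCount b k (b * repunit b k) = b := by
  obtain ⟨n, rfl⟩ := Nat.exists_eq_add_of_le' hk
  simpa [mul_comm b] using
    greedyCount_succ_mul_add (n := n) (s := b) (repunit_pos b (Nat.le_add_left 1 n))

lemma greedyCount_mul_repunit_le (k : ℕ) : greedyCount b k (b * repunit b k) ≤ b := by
  rcases k with _ | n
  · simp [repunit]
  · exact (greedyCount_mul_repunit (Nat.le_add_left 1 n)).le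

lemma greedyCount_le_self (k T : ℕ) : greedyCount b k T ≤ T := by
  induction k generalizing T with
  | zero => rfl
  | succ n ih =>
    have := Nat.div_add_mod T (repunit b (n + 1))
    have := Nat.le_mul_of_pos_left (T / repunit b (n + 1)) (repunit_pos b (Nat.le_add_left 1 n))
    have := ih (T % repunit b (n + 1))
    simp only [greedyCount]
    omega

lemma greedyCount_le_succ_add (k T : ℕ) :
    greedyCount b k T ≤ greedyCount b k (T + 1) + (b - 1) := by
  induction k generalizing T with
  | zero => simp only [greedyCount]; omega
  | succ n ih =>
    set R := repunit b (n + 1) with hRdef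
    have hR : 0 < R := repunit_pos b (Nat.le_add_left 1 n)
    obtain ⟨s, t, ht, hT⟩ : ∃ s t, t < R ∧ T + 1 = R * s + t :=
      ⟨(T + 1) / R, (T + 1) % R, Nat.mod_lt _ hR, (Nat.div_add_mod _ _).symm⟩
    rw [hT, greedyCount_succ_mul_add ht]
    rcases t with _ | t
    · -- `T` is one below a multiple of `R = b * repunit b n + 1`
      obtain ⟨s, rfl⟩ : ∃ s', s = s' + 1 := Nat.exists_eq_succ_of_ne_zero (by rintro rfl; omega)
      have hT' : T = R * s + b * repunit b n := by
        rw [hRdef, repunit_succ] at hT ⊢; linarith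
      have hlt : b * repunit b n < R := by rw [hRdef, repunit_succ]; omega
      rw [hT', greedyCount_succ_mul_add hlt]
      have := greedyCount_mul_repunit_le (b := b) n
      simp only [greedyCount_zero_right]
      omega
    · rw [show T = R * s + t by omega, greedyCount_succ_mul_add (by omega)]
      have := ih t
      omega

lemma greedyCount_le_add_mul (k T m : ℕ) :
    greedyCount b k T ≤ greedyCount b k (T + m) + m * (b - 1) := by
  induction m with
  | zero => simp
  | succ m ih =>
    have := greedyCount_le_succ_add (b := b) k (T + m)
    rw [← add_assoc, add_one_mul]
    omega

lemma greedyCount_le_add_pow (hb : 1 ≤ b) (k T : ℕ) :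
    greedyCount b (k + 1) T ≤ greedyCount b (k + 1) (T + b ^ k) := by
  rcases k with _ | m
  · simp [greedyCount_one]
  set R := repunit b (m + 1 + 1)
  set r := repunit b (m + 1) with hrdef
  have hR : R = r + b ^ (m + 1) := (repunit_add_pow b (m + 1)).symm
  have hpow : b ^ (m + 1) = r * (b - 1) + 1 := by
    rw [← sub_one_mul_repunit_add_one hb, mul_comm]
  obtain ⟨s, t, ht, rfl⟩ : ∃ s t, t < R ∧ T = R * s + t :=
    ⟨T / R, T % R, Nat.mod_lt _ (repunit_pos b (by omega)), (Nat.div_add_mod _ _).symm⟩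
  rw [greedyCount_succ_mul_add ht]
  by_cases htr : r ≤ t
  · -- the added power carries into the top repunit
    rw [show R * s + t + b ^ (m + 1) = R * (s + 1) + (t - r) by rw [hR] at ht ⊢; ring_nf; omega,
      greedyCount_succ_mul_add (by omega)]
    have := greedyCount_add_repunit_mul (b := b) m (t - r) 1
    rw [mul_one, ← hrdef, Nat.sub_add_cancel htr] at this
    omega
  · have hlow : greedyCount b (m + 1) t = greedyCount b m t :=
      greedyCount_succ_of_lt (by omega)
    rw [Nat.add_assoc (R * s), greedyCount_succ_mul_add (by omega), hlow]
    -- `t + b ^ (m + 1) = r * (b - 1) + (t + 1)`: the `b - 1` extra copies of `r` pay for the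
    -- step from `t` to `t + 1`
    rcases Nat.lt_or_ge (t + 1) r with ht1 | ht1
    · rw [show t + b ^ (m + 1) = r * (b - 1) + (t + 1) by omega, greedyCount_succ_mul_add ht1]
      have := greedyCount_le_succ_add (b := b) m t
      omega
    · have hrt : r = t + 1 := by omega
      have ht : t = b * repunit b m := by rw [hrdef, repunit_succ] at hrt; omega
      have hrb : r * (b - 1) + r = r * b := by
        rw [Nat.mul_sub_one, Nat.sub_add_cancel (Nat.le_mul_of_pos_right r hb)]
      rw [show t + b ^ (m + 1) = r * b + 0 by omega,
        greedyCount_succ_mul_add (repunit_pos b (Nat.le_add_left 1 m)), greedyCount_zero_right, ht]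
      have := greedyCount_mul_repunit_le (b := b) m
      omega

lemma greedyCount_succ_le (hb : 1 ≤ b) {k : ℕ} (hk : 1 ≤ k) (T : ℕ) :
    greedyCount b (k + 1) T ≤ greedyCount b k T := by
  obtain ⟨n, rfl⟩ := Nat.exists_eq_add_of_le' hk
  induction T using Nat.strong_induction_on with
  | _ T ih =>
  by_cases hT : T < repunit b (n + 1 + 1)
  · rw [greedyCount_succ_of_lt hT]
  have hsplit := repunit_add_pow b (n + 1)
  have hr : 0 < repunit b (n + 1) := repunit_pos b (by omega)
  obtain ⟨T', rfl⟩ : ∃ T', T = T' + repunit b (n + 1 + 1) := ⟨T - repunit b (n + 1 + 1), by omega⟩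
  have htop := greedyCount_add_repunit_mul (b := b) (n + 1) T' 1
  have hnext := greedyCount_add_repunit_mul (b := b) n (T' + b ^ (n + 1)) 1
  rw [mul_one] at htop hnext
  calc greedyCount b (n + 1 + 1) (T' + repunit b (n + 1 + 1))
      = greedyCount b (n + 1 + 1) T' + 1 := htop
    _ ≤ greedyCount b (n + 1 + 1) (T' + b ^ (n + 1)) + 1 :=
      Nat.add_le_add_right (greedyCount_le_add_pow hb _ _) 1
    _ ≤ greedyCount b (n + 1) (T' + b ^ (n + 1)) + 1 := Nat.add_le_add_right (ih _ (by omega)) 1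
    _ = greedyCount b (n + 1) (T' + repunit b (n + 1 + 1)) := by
      rw [← hnext, ← hsplit]
      ring_nf

lemma greedyCount_le_sum (hb : 1 ≤ b) {k : ℕ} (hk : 1 ≤ k) (y : ℕ → ℕ) :
    greedyCount b k (∑ i ∈ Icc 1 k, repunit b i * y i) ≤ ∑ i ∈ Icc 1 k, y i := by
  induction k, hk using Nat.le_induction with
  | base => simp [repunit_one, greedyCount_one]
  | succ n hn ih =>
    rw [sum_Icc_succ_top (by omega), sum_Icc_succ_top (by omega), greedyCount_add_repunit_mul]
    have := greedyCount_succ_le hb hn (∑ i ∈ Icc 1 n, repunit b i * y i)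
    omega

lemma exists_sum_eq_greedyCount {k : ℕ} (hk : 1 ≤ k) (T : ℕ) :
    ∃ y : ℕ → ℕ, ∑ i ∈ Icc 1 k, repunit b i * y i = T ∧
      ∑ i ∈ Icc 1 k, y i = greedyCount b k T := by
  induction k, hk using Nat.le_induction generalizing T with
  | base => exact ⟨fun _ => T, by simp [repunit_one], by simp [greedyCount_one]⟩
  | succ n hn ih =>
    obtain ⟨y, hyT, hyG⟩ := ih (T % repunit b (n + 1))
    have hy : ∀ i ∈ Icc 1 n, Function.update y (n + 1) (T / repunit b (n + 1)) i = y i :=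
      fun i hi => Function.update_of_ne (by grind) _ _
    refine ⟨Function.update y (n + 1) (T / repunit b (n + 1)), ?_, ?_⟩
    · rw [sum_Icc_succ_top (by omega), sum_congr rfl fun i hi => by rw [hy i hi], hyT,
        Function.update_self, Nat.mod_add_div]
    · rw [sum_Icc_succ_top (by omega), sum_congr rfl hy, hyG, Function.update_self, greedyCount,
        add_comm]

end greedyCount

/-- The paper's constraints on the digits `x₁, …, x_m` below the top digit of a greedy
presentation. -/
def GreedyDigits (b m : ℕ) (x : ℕ → ℕ) : Prop :=
  (∀ i, 1 ≤ i → i ≤ m → x i ≤ b) ∧ ∀ i, 2 ≤ i → i ≤ m → x i = b → ∀ j, 1 ≤ j → j < i → x j = 0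

namespace GreedyDigits

variable {b m : ℕ} {x : ℕ → ℕ}

lemma of_succ (h : GreedyDigits b (m + 1) x) : GreedyDigits b m x :=
  ⟨fun i h1 _ => h.1 i h1 (by omega), fun i h1 _ => h.2 i h1 (by omega)⟩

lemma sum_lt (h : GreedyDigits b m x) :
    ∑ i ∈ Icc 1 m, repunit b i * x i < repunit b (m + 1) := by
  induction m with
  | zero => simp [repunit_one]
  | succ n ih =>
    rw [sum_Icc_succ_top (by omega), repunit_succ b (n + 1)]
    by_cases hxb : x (n + 1) = b
    · have hlow : ∑ i ∈ Icc 1 n, repunit b i * x i = 0 := sum_eq_zero fun i hi => by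
        rw [mem_Icc] at hi
        rw [h.2 (n + 1) (by omega) le_rfl hxb i hi.1 (by omega), mul_zero]
      rw [hlow, hxb, mul_comm]
      omega
    · have hx : x (n + 1) + 1 ≤ b := by
        have := h.1 (n + 1) (by omega) le_rfl
        omega
      have := ih h.of_succ
      nlinarith

lemma greedyCount_eq (h : GreedyDigits b m x) :
    greedyCount b (m + 1) (∑ i ∈ Icc 1 (m + 1), repunit b i * x i) = ∑ i ∈ Icc 1 (m + 1), x i := by
  induction m with
  | zero => simp [repunit_one, greedyCount_one]
  | succ n ih =>
    have hsplit (f : ℕ → ℕ) :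
        ∑ i ∈ Icc 1 (n + 1 + 1), f i = f (n + 1 + 1) + ∑ i ∈ Icc 1 (n + 1), f i :=
      (sum_Icc_succ_top (by omega) f).trans (Nat.add_comm _ _)
    rw [hsplit, hsplit, greedyCount_succ_mul_add h.sum_lt, ih h.of_succ]

end GreedyDigits

def IsRep (f : ℕ → ℕ) (a c n : ℕ) : Prop := ∃ M T, f T ≤ M ∧ n = M * a + T * c

section Generators

variable {b : ℕ}

lemma pow_mul_add_repunit_mul (hb : 1 ≤ b) (a d i : ℕ) :
    b ^ i * a + repunit b i * d = a + repunit b i * ((b - 1) * a + d) := by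
  rw [← sub_one_mul_repunit_add_one hb]
  ring

lemma sum_generators_eq (hb : 1 ≤ b) (a d k : ℕ) (y : ℕ → ℕ) :
    y 0 * a + ∑ i ∈ Icc 1 k, y i * (b ^ i * a + repunit b i * d) =
      (y 0 + ∑ i ∈ Icc 1 k, y i) * a +
        (∑ i ∈ Icc 1 k, repunit b i * y i) * ((b - 1) * a + d) := by
  have hterm (i : ℕ) : y i * (b ^ i * a + repunit b i * d) =
      y i * a + repunit b i * y i * ((b - 1) * a + d) := by
    rw [pow_mul_add_repunit_mul hb]
    ring
  simp only [hterm, sum_add_distrib, add_mul, sum_mul]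
  ring

lemma exists_generators_iff (hb : 1 ≤ b) {k : ℕ} (hk : 1 ≤ k) (a d m : ℕ) :
    (∃ y : ℕ → ℕ, m = y 0 * a + ∑ i ∈ Icc 1 k, y i * (b ^ i * a + repunit b i * d)) ↔
      IsRep (greedyCount b k) a ((b - 1) * a + d) m := by
  constructor
  · rintro ⟨y, rfl⟩
    refine ⟨y 0 + ∑ i ∈ Icc 1 k, y i, _, ?_, sum_generators_eq hb a d k y⟩
    have := greedyCount_le_sum hb hk y
    omega
  · rintro ⟨M, T, hTM, rfl⟩
    obtain ⟨z, hzT, hzG⟩ := exists_sum_eq_greedyCount (b := b) hk T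
    have hz : ∀ i ∈ Icc 1 k, Function.update z 0 (M - greedyCount b k T) i = z i :=
      fun i hi => Function.update_of_ne (by grind) _ _
    have hcount := (sum_congr rfl hz).trans hzG
    have hsum : ∑ i ∈ Icc 1 k, repunit b i * Function.update z 0 (M - greedyCount b k T) i = T :=
      (sum_congr rfl fun i hi => by rw [hz i hi]).trans hzT
    refine ⟨Function.update z 0 (M - greedyCount b k T), ?_⟩
    rw [sum_generators_eq hb, hcount, hsum, Function.update_self, Nat.sub_add_cancel hTM]

lemma isRep_mul_iff {f : ℕ → ℕ} {p q c n : ℕ} (hp : 0 < p) (hpc : p.Coprime c) :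
    IsRep f (p * q) c (p * n) ↔ IsRep (fun t => f (p * t)) q c n := by
  constructor
  · rintro ⟨M, T, hM, hn⟩
    obtain ⟨t, rfl⟩ : p ∣ T := hpc.dvd_of_dvd_mul_right <|
      (Nat.dvd_add_right (dvd_mul_of_dvd_right (dvd_mul_right p q) M)).1 (hn ▸ dvd_mul_right p n)
    refine ⟨M, t, hM, Nat.eq_of_mul_eq_mul_left hp ?_⟩
    rw [hn]
    ring
  · rintro ⟨M, t, hM, rfl⟩
    exact ⟨M, p * t, hM, by ring⟩

lemma mul_greedyCount_add_mul_le (k d : ℕ) {p q t : ℕ} (ht : t < q) :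
    q * greedyCount b k (p * t) + t * ((b - 1) * (p * q) + d) ≤
      q * greedyCount b k (p * (q - 1)) + (q - 1) * ((b - 1) * (p * q) + d) := by
  obtain ⟨s, hs⟩ : ∃ s, q - 1 = t + s := ⟨q - 1 - t, by omega⟩
  have h := greedyCount_le_add_mul (b := b) k (p * t) (p * s)
  rw [← Nat.mul_add, ← hs] at h
  calc q * greedyCount b k (p * t) + t * ((b - 1) * (p * q) + d)
      ≤ q * (greedyCount b k (p * (q - 1)) + p * s * (b - 1)) + t * ((b - 1) * (p * q) + d) := by
        gcongr
    _ = q * greedyCount b k (p * (q - 1)) + s * ((b - 1) * (p * q)) +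
          t * ((b - 1) * (p * q) + d) := by
        ring
    _ ≤ q * greedyCount b k (p * (q - 1)) + (q - 1) * ((b - 1) * (p * q) + d) := by
        rw [hs]; nlinarith

end Generators

section Frobenius

variable {f : ℕ → ℕ} {q c : ℕ}

lemma not_isRep_of_eq (hq : 0 < q) (hqc : q.Coprime c) (hfc : f (q - 1) ≤ c) {n : ℕ}
    (hn : (n : ℤ) = f (q - 1) * q + ((q : ℤ) - 1) * c - q) : ¬ IsRep f q c n := by
  rintro ⟨M, t, hM, rfl⟩
  push_cast at hn
  obtain ⟨j, hj⟩ : (q : ℤ) ∣ t - (q - 1) :=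
    (Nat.isCoprime_iff_coprime.2 hqc).dvd_of_dvd_mul_right
      ⟨f (q - 1) - 1 - M, by linear_combination hn⟩
  have hMj : (M : ℤ) + j * c = f (q - 1) - 1 := by
    refine mul_left_cancel₀ (by positivity : (q : ℤ) ≠ 0) ?_
    linear_combination hn - c * hj
  rcases lt_trichotomy j 0 with hj0 | rfl | hj0
  · nlinarith
  · have : t = q - 1 := by omega
    subst this
    omega
  · have : (c : ℤ) ≤ j * c := le_mul_of_one_le_left (by positivity) (by omega)
    omega

lemma isRep_of_lt (hq : 0 < q) (hqc : q.Coprime c)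
    (hmax : ∀ t < q, q * f t + t * c ≤ q * f (q - 1) + (q - 1) * c) {n : ℕ}
    (hn : (f (q - 1) * q + ((q : ℤ) - 1) * c - q : ℤ) < n) : IsRep f q c n := by
  obtain ⟨t, ht, htn⟩ := Nat.exists_mul_mod_eq_of_coprime n hqc.symm hq.ne'
  obtain ⟨M, hM⟩ : (q : ℤ) ∣ n - t * c := by simpa [mul_comm] using Nat.modEq_iff_dvd.1 htn
  have hmaxt := hmax t ht
  have hfM : (f t : ℤ) ≤ M := by
    by_contra! h
    have : (q : ℤ) * M ≤ q * (f t - 1) := mul_le_mul_of_nonneg_left (by omega) (by positivity)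
    have : ((q * f t + t * c : ℕ) : ℤ) ≤ (q * f (q - 1) + (q - 1) * c : ℕ) := by
      exact_mod_cast hmaxt
    push_cast [Nat.cast_sub (Nat.one_le_of_lt ht)] at this
    nlinarith
  lift M to ℕ using (by omega)
  have hn' : (n : ℤ) = M * q + t * c := by linear_combination hM
  exact ⟨M, t, by exact_mod_cast hfM, by exact_mod_cast hn'⟩

theorem isGreatest_not_isRep (hq : 0 < q) (hqc : q.Coprime c) (hfc : f (q - 1) ≤ c)
    (hmax : ∀ t < q, q * f t + t * c ≤ q * f (q - 1) + (q - 1) * c) :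
    IsGreatest {z : ℤ | ¬ ∃ n : ℕ, (n : ℤ) = z ∧ IsRep f q c n}
      (f (q - 1) * q + ((q : ℤ) - 1) * c - q) := by
  refine ⟨fun ⟨n, hn, hrep⟩ => not_isRep_of_eq hq hqc hfc hn hrep, fun z hz => ?_⟩
  by_contra! hlt
  have hN : -1 ≤ (f (q - 1) * q + ((q : ℤ) - 1) * c - q : ℤ) := by
    rcases c.eq_zero_or_pos with rfl | hc
    · obtain rfl : q = 1 := Nat.coprime_zero_right q |>.1 hqc
      simp only [Nat.cast_one, Nat.cast_zero, mul_zero, add_zero, mul_one]; omega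
    · have : (1 : ℤ) ≤ q := by exact_mod_cast hq
      nlinarith
  lift z to ℕ using by omega
  exact hz ⟨z, rfl, isRep_of_lt hq hqc hmax hlt⟩

end Frobenius

theorem stmt_13_general (a k b d p : ℕ)
    (ha : 2 ≤ a) (hk : 2 ≤ k) (hb : 2 ≤ b)
    (hgcd : Nat.gcd a d = 1)
    (hp : 0 < p) (hpa : p ∣ a)
    -- `x` is the greedy presentation of `a - p` with respect to `B`
    (x : ℕ → ℕ)
    (hxsum : ∑ i ∈ Finset.Icc 1 k, repunit b i * x i = a - p)
    (hxle : ∀ i, 1 ≤ i → i ≤ k - 1 → x i ≤ b)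
    (hxzero : ∀ i, 2 ≤ i → i ≤ k - 1 → x i = b → ∀ j, 1 ≤ j → j < i → x j = 0) :
    IsGreatest {z : ℤ | ¬ ∃ n : ℕ, (n : ℤ) = z ∧
        ∃ y : ℕ → ℕ, p * n = y 0 * a +
          ∑ i ∈ Finset.Icc 1 k, y i * (b ^ i * a + repunit b i * d)}
      (((∑ i ∈ Finset.Icc 1 k, x i : ℕ) : ℤ) * ((a / p : ℕ) : ℤ) +
        (((a / p : ℕ) : ℤ) - 1) * (((b : ℤ) - 1) * a + d) - ((a / p : ℕ) : ℤ)) := by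
  obtain ⟨q, rfl⟩ := hpa
  have hq : 0 < q := Nat.pos_of_mul_pos_left (by omega : 0 < p * q)
  have hcop : (p * q).Coprime ((b - 1) * (p * q) + d) := by simpa using hgcd
  have hgs : ∑ i ∈ Icc 1 k, x i = greedyCount b k (p * (q - 1)) := by
    obtain ⟨m, rfl⟩ := Nat.exists_eq_add_of_le' (by omega : 1 ≤ k)
    rw [← (show GreedyDigits b m x from ⟨hxle, hxzero⟩).greedyCount_eq, hxsum, Nat.mul_sub_one]
  have hfc : greedyCount b k (p * (q - 1)) ≤ (b - 1) * (p * q) + d :=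
    (greedyCount_le_self k _).trans <| by
      have := Nat.le_mul_of_pos_left (p * q) (by omega : 0 < b - 1)
      have := Nat.mul_le_mul_left p (Nat.sub_le q 1)
      omega
  have key := isGreatest_not_isRep (f := fun t => greedyCount b k (p * t)) hq
    (Nat.Coprime.coprime_mul_left hcop) hfc fun t ht => mul_greedyCount_add_mul_le k d ht
  rw [Nat.mul_div_cancel_left q hp, hgs]
  convert key using 1
  · ext z
    simp only [Set.mem_ofPred_eq, exists_generators_iff (by omega : 1 ≤ b) (by omega : 1 ≤ k),
      isRep_mul_iff hp (Nat.Coprime.coprime_mul_right hcop)]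
  · push_cast [Nat.cast_sub (by omega : 1 ≤ b)]
    ring

/-- Frobenius number of the quotient of a CNS numerical semigroup
`⟨a, ba + d, b²a + (b²−1)/(b−1)·d, …, bᵏa + (bᵏ−1)/(b−1)·d⟩` by a positive divisor
`p ≠ a` of `a`. If `a ≥ k − 1 − (d−1)/(b−1)`, then
`F(⟨A⟩/p) = (Σ x_i)·(a/p) + (a/p − 1)·((b−1)a + d) − a/p`, where `(x_1,…,x_k)` is the
greedy presentation of `a − p` with respect to `B = ((bⁱ−1)/(b−1))_{1≤i≤k}`. -/
theorem stmt_13 (a k b d p : ℕ)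
    (ha : 2 ≤ a) (hk : 2 ≤ k) (hb : 2 ≤ b) (hd : 1 ≤ d)
    (hgcd : Nat.gcd a d = 1)
    (hp : 0 < p) (hpa : p ∣ a) (hpne : p ≠ a)
    (hcond : (k : ℚ) - 1 - ((d : ℚ) - 1) / ((b : ℚ) - 1) ≤ (a : ℚ))
    -- `x` is the greedy presentation of `a - p` with respect to `B`
    (x : ℕ → ℕ)
    (hxsum : ∑ i ∈ Finset.Icc 1 k, repunit b i * x i = a - p)
    (hxk : x k = (a - p) / repunit b k)
    (hxle : ∀ i, 1 ≤ i → i ≤ k - 1 → x i ≤ b)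
    (hxzero : ∀ i, 2 ≤ i → i ≤ k - 1 → x i = b → ∀ j, 1 ≤ j → j < i → x j = 0) :
    IsGreatest {z : ℤ | ¬ ∃ n : ℕ, (n : ℤ) = z ∧
        ∃ y : ℕ → ℕ, p * n = y 0 * a +
          ∑ i ∈ Finset.Icc 1 k, y i * (b ^ i * a + repunit b i * d)}
      (((∑ i ∈ Finset.Icc 1 k, x i : ℕ) : ℤ) * ((a / p : ℕ) : ℤ) +
        (((a / p : ℕ) : ℤ) - 1) * (((b : ℤ) - 1) * a + d) - ((a / p : ℕ) : ℤ)) :=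
  stmt_13_general a k b d p ha hk hb hgcd hp hpa x hxsum hxle hxzero
end

section
/- Let ⟨A⟩ be a CNS numerical semigroup with parameters a ≥ 2, k ≥ 2, b ≥ 2, and positive integer d with gcd(a,d) = 1, and let p be a positive divisor of a with p ≠ a. If a ≥ k − 1 − (d−1)/(b−1), then the genus of the quotient is g(⟨A⟩/p) = Σ_{r=1}^{a/p − 1} (Σ_{i=1}^k x_i)_{rp} + (((b−1)*a + d − 1)/2) * (a/p − 1), where (Σ_{i=1}^k x_i)_{rp} denotes the sum of the coordinates of the greedy presentation X(r*p) of r*p with respect to B = (1, b+1, b²+b+1, ..., (b^k−1)/(b−1)). -/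
/-!
Every generator is `gᵢ = bᵢ·C + a` with `C = (b - 1)a + d`, so an element of `⟨A⟩` reads
`y₀a + M·C + σ·a` with `M = ∑ bᵢyᵢ` and `σ = ∑ yᵢ`. As `gcd(C, a) = 1`, the least element of
`⟨A⟩` congruent to `M·C` modulo `a` (for `M < a`) is `M·C + σ(M)·a`, where `σ(M)` is the least
coordinate sum of a presentation of `M`. Greedy presentations attain it: the exchange
`b·bᵢ + bⱼ = bᵢ₊₁ + b·bⱼ₋₁` moves any presentation towards the unique greedy one without
increasing the coordinate sum. For `a = pq` the residue classes of `⟨A⟩/p` modulo `q` are those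
of `rC`, `0 ≤ r < q`, with least elements `rC + q·σ(rp)`. Hence the genus is
`∑ᵣ (⌊rC/q⌋ + σ(rp))`, and `∑ᵣ ⌊rC/q⌋ = (C - 1)(q - 1)/2`.
-/

open Finset

namespace CNS

theorem repunit_zero (b : ℕ) : repunit b 0 = 0 := rfl

theorem repunit_succ (b i : ℕ) : repunit b (i + 1) = b * repunit b i + 1 := by
  simp [repunit, sum_range_succ', pow_succ', mul_sum]

theorem repunit_pos (b : ℕ) {i : ℕ} (hi : 0 < i) : 0 < repunit b i := by
  obtain ⟨j, rfl⟩ := Nat.exists_eq_add_of_lt hi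
  rw [zero_add, repunit_succ]
  exact Nat.succ_pos _

theorem sub_one_mul_repunit_add_one (i : ℕ) {b : ℕ} (hb : 1 ≤ b) :
    (b - 1) * repunit b i + 1 = b ^ i := by
  induction i with
  | zero => rfl
  | succ i ih =>
    obtain ⟨c, rfl⟩ := Nat.exists_eq_add_of_le hb
    rw [repunit_succ, pow_succ, ← ih]
    simp only [Nat.add_sub_cancel_left]
    ring

def value (b k : ℕ) (y : ℕ → ℕ) : ℕ := ∑ i ∈ Icc 1 k, repunit b i * y i

def coordSum (k : ℕ) (y : ℕ → ℕ) : ℕ := ∑ i ∈ Icc 1 k, y i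

def moment (k : ℕ) (y : ℕ → ℕ) : ℕ := ∑ i ∈ Icc 1 k, i * y i

def IsGreedy (b k : ℕ) (x : ℕ → ℕ) : Prop :=
  (∀ i, 1 ≤ i → i ≤ k - 1 → x i ≤ b) ∧
    ∀ i, 2 ≤ i → i ≤ k - 1 → x i = b → ∀ j, 1 ≤ j → j < i → x j = 0

theorem coordSum_le_value (b k : ℕ) (y : ℕ → ℕ) : coordSum k y ≤ value b k y :=
  sum_le_sum fun _ hi => Nat.le_mul_of_pos_left _ (repunit_pos b (mem_Icc.1 hi).1)

section Exchange

variable {b k : ℕ}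

theorem exchange {i j : ℕ} (hb : 2 ≤ b) (hj : 1 ≤ j) (hji : j ≤ i) (hik : i < k) (z : ℕ → ℕ) :
    let y := z + (Pi.single i b + Pi.single j 1)
    let y' := z + (Pi.single (i + 1) 1 + Pi.single (j - 1) b)
    value b k y' = value b k y ∧ coordSum k y' ≤ coordSum k y ∧ moment k y' < moment k y := by
  obtain ⟨j, rfl⟩ := Nat.exists_eq_add_of_le' hj
  have hR : repunit b (i + 1) + repunit b j * b = repunit b i * b + repunit b (j + 1) := by
    rw [repunit_succ, repunit_succ]; ring
  have hmom : i + 1 + j * b < i * b + (j + 1) := by nlinarith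
  simp only [value, coordSum, moment, Pi.add_apply, mul_add, sum_add_distrib, Pi.single_apply,
    mul_ite, mul_zero, mul_one, sum_ite_eq', mem_Icc, Nat.add_sub_cancel,
    if_pos (show 1 ≤ i + 1 ∧ i + 1 ≤ k by omega), if_pos (show 1 ≤ i ∧ i ≤ k by omega),
    if_pos (show 1 ≤ j + 1 ∧ j + 1 ≤ k by omega)]
  rcases Nat.eq_zero_or_pos j with rfl | hj0
  · simp only [repunit_zero, zero_mul, zero_add, Nat.le_zero, one_ne_zero, false_and,
      if_false] at hR hmom ⊢
    omega
  · simp only [if_pos (show 1 ≤ j ∧ j ≤ k by omega)]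
    omega

theorem exists_single_add_single_le_of_not_isGreedy {y : ℕ → ℕ} (h : ¬IsGreedy b k y) :
    ∃ i j, 1 ≤ j ∧ j ≤ i ∧ i < k ∧ Pi.single i b + Pi.single j 1 ≤ y := by
  simp only [IsGreedy, not_and_or, not_forall, not_le] at h
  rcases h with ⟨i, hi, hik, hyi⟩ | ⟨i, hi, hik, hyi, j, hj, hji, hyj⟩
  · refine ⟨i, i, hi, le_rfl, by omega, fun n => ?_⟩
    simp only [Pi.add_apply, Pi.single_apply]
    split_ifs <;> subst_vars <;> omega
  · refine ⟨i, j, hj, hji.le, by omega, fun n => ?_⟩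
    simp only [Pi.add_apply, Pi.single_apply]
    split_ifs <;> subst_vars <;> omega

end Exchange

/-- Induction on the moment, which every exchange decreases. -/
theorem exists_isGreedy {b : ℕ} (hb : 2 ≤ b) (k : ℕ) (y : ℕ → ℕ) :
    ∃ x, IsGreedy b k x ∧ value b k x = value b k y ∧ coordSum k x ≤ coordSum k y := by
  induction hy : moment k y using Nat.strong_induction_on generalizing y with
  | _ N ih =>
    by_cases hg : IsGreedy b k y
    · exact ⟨y, hg, rfl, le_rfl⟩
    obtain ⟨i, j, hj, hji, hik, hle⟩ := exists_single_add_single_le_of_not_isGreedy hg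
    obtain ⟨hval, hsum, hmom⟩ := exchange hb hj hji hik (y - (Pi.single i b + Pi.single j 1))
    rw [tsub_add_cancel_of_le hle] at hval hsum hmom
    obtain ⟨x, hx, hxv, hxs⟩ := ih _ (hy ▸ hmom) _ rfl
    exact ⟨x, hx, hxv.trans hval, hxs.trans hsum⟩

section Uniqueness

variable {b : ℕ} {x z : ℕ → ℕ}

theorem value_succ (b k : ℕ) (y : ℕ → ℕ) :
    value b (k + 1) y = value b k y + repunit b (k + 1) * y (k + 1) :=
  sum_Icc_succ_top (by omega) _

theorem value_lt_repunit_of_isGreedy {k : ℕ} (hx : IsGreedy b k x) :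
    ∀ j < k, value b j x < repunit b (j + 1) := by
  intro j
  induction j with
  | zero => intro _; simp [value, repunit]
  | succ j ih =>
    intro hjk
    have hle : x (j + 1) ≤ b := hx.1 _ (by omega) (by omega)
    rw [value_succ, repunit_succ b (j + 1)]
    rcases hle.lt_or_eq with hlt | heq
    · calc value b j x + repunit b (j + 1) * x (j + 1)
          < repunit b (j + 1) * (x (j + 1) + 1) := by rw [mul_add_one]; linarith [ih (by omega)]
        _ ≤ repunit b (j + 1) * b := Nat.mul_le_mul_left _ hlt
        _ < b * repunit b (j + 1) + 1 := by rw [mul_comm]; exact Nat.lt_succ_self _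
    · have hprefix : value b j x = 0 := by
        rcases Nat.eq_zero_or_pos j with rfl | hj
        · rfl
        · exact sum_eq_zero fun i hi => by
            rw [hx.2 (j + 1) (by omega) (by omega) heq i (mem_Icc.1 hi).1 (by grind), mul_zero]
      rw [hprefix, heq, zero_add, mul_comm]
      exact Nat.lt_succ_self _

/-- Uniqueness of mixed-radix digits: the top digit and the rest are the quotient and remainder
of the value by `bₖ`. -/
theorem eqOn_of_value_eq {k : ℕ} (hx : ∀ j < k, value b j x < repunit b (j + 1))
    (hz : ∀ j < k, value b j z < repunit b (j + 1)) (h : value b k x = value b k z) :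
    ∀ i ∈ Icc 1 k, x i = z i := by
  induction k with
  | zero => simp
  | succ k ih =>
    have hdigits : ∀ y : ℕ → ℕ, (∀ j < k + 1, value b j y < repunit b (j + 1)) →
        value b (k + 1) y / repunit b (k + 1) = y (k + 1) ∧
          value b (k + 1) y % repunit b (k + 1) = value b k y := fun y hy =>
      (Nat.div_mod_unique (repunit_pos b k.succ_pos)).2
        ⟨(value_succ b k y).symm, hy k k.lt_succ_self⟩
    obtain ⟨hxtop, hxrest⟩ := hdigits x hx
    obtain ⟨hztop, hzrest⟩ := hdigits z hz
    intro i hi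
    rcases (mem_Icc.1 hi).2.lt_or_eq with hik | rfl
    · exact ih (fun j hj => hx j (by omega)) (fun j hj => hz j (by omega))
        (by rw [← hxrest, ← hzrest, h]) i (mem_Icc.2 ⟨(mem_Icc.1 hi).1, by omega⟩)
    · rw [← hxtop, ← hztop, h]

theorem coordSum_le_of_isGreedy (hb : 2 ≤ b) {k : ℕ} (hx : IsGreedy b k x) {y : ℕ → ℕ}
    (h : value b k x = value b k y) : coordSum k x ≤ coordSum k y := by
  obtain ⟨z, hz, hzv, hzs⟩ := exists_isGreedy hb k y
  have hxz := eqOn_of_value_eq (value_lt_repunit_of_isGreedy hx)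
    (value_lt_repunit_of_isGreedy hz) (h.trans hzv.symm)
  rw [coordSum, sum_congr rfl hxz]
  exact hzs

end Uniqueness

section Semigroup

def cnsSemigroup (a b d k : ℕ) : Set ℕ :=
  {N | ∃ y : ℕ → ℕ, N = y 0 * a + ∑ i ∈ Icc 1 k, y i * (b ^ i * a + repunit b i * d)}

variable {a b d k : ℕ}

theorem sum_generators (hb : 1 ≤ b) (y : ℕ → ℕ) :
    ∑ i ∈ Icc 1 k, y i * (b ^ i * a + repunit b i * d)
      = value b k y * ((b - 1) * a + d) + coordSum k y * a := by
  simp only [value, coordSum, sum_mul, ← sum_add_distrib]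
  refine sum_congr rfl fun i _ => ?_
  rw [← sub_one_mul_repunit_add_one i hb]
  ring

theorem mul_mem_cnsSemigroup (t : ℕ) : a * t ∈ cnsSemigroup a b d k :=
  ⟨Pi.single 0 t, by
    rw [sum_eq_zero fun i hi => by rw [Pi.single_eq_of_ne (by grind), zero_mul]]
    simp [mul_comm]⟩

theorem mem_cnsSemigroup_iff (hb : 2 ≤ b) (hcop : Nat.Coprime a d) {M N : ℕ} {x : ℕ → ℕ}
    (hx : IsGreedy b k x) (hxM : value b k x = M) (hMa : M < a)
    (hN : N ≡ M * ((b - 1) * a + d) [MOD a]) :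
    N ∈ cnsSemigroup a b d k ↔ M * ((b - 1) * a + d) + coordSum k x * a ≤ N := by
  have hσ : coordSum k x < a := by have := coordSum_le_value b k x; omega
  constructor
  · rintro ⟨y, rfl⟩
    rw [sum_generators (by omega)] at hN ⊢
    generalize hC : (b - 1) * a + d = C at hN ⊢
    have hCa : a ≤ C := hC ▸ Nat.le_add_right_of_le (Nat.le_mul_of_pos_left a (by omega))
    have hcopC : Nat.Coprime a C := hC ▸ (Nat.coprime_mul_right_add_right a d (b - 1)).2 hcop
    have hyM : value b k y ≡ M [MOD a] := by
      refine Nat.ModEq.cancel_right_of_coprime hcopC ?_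
      rw [show y 0 * a + (value b k y * C + coordSum k y * a)
        = value b k y * C + (y 0 + coordSum k y) * a by ring] at hN
      exact (Nat.add_mul_mod_self_right _ _ _).symm.trans hN
    obtain ⟨t, ht⟩ : ∃ t, value b k y = M + a * t :=
      ⟨value b k y / a, by rw [← Nat.mod_eq_of_lt hMa, ← hyM, Nat.mod_add_div]⟩
    rw [ht]
    rcases Nat.eq_zero_or_pos t with rfl | ht0
    · have := coordSum_le_of_isGreedy hb hx (hxM.trans (by simpa using ht.symm))
      nlinarith
    · calc M * C + coordSum k x * a ≤ M * C + C * a := by gcongr; exact hσ.le.trans hCa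
        _ ≤ y 0 * a + ((M + a * t) * C + coordSum k y * a) := by
          nlinarith [Nat.mul_le_mul_left (C * a) ht0]
  · intro hle
    obtain ⟨s, hs⟩ : a ∣ N - (M * ((b - 1) * a + d) + coordSum k x * a) :=
      (Nat.modEq_iff_dvd' hle).1 ((Nat.add_mul_mod_self_right _ _ _).trans hN.symm)
    refine ⟨Function.update x 0 s, ?_⟩
    rw [sum_congr rfl fun i hi => by rw [Function.update_of_ne (by grind)],
      sum_generators (by omega), hxM, Function.update_self]
    rw [Nat.sub_eq_iff_eq_add hle] at hs
    linarith

end Semigroup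

section Residues

variable {C q : ℕ}

theorem eq_of_mul_modEq_mul (hcop : Nat.Coprime C q) {r₁ r₂ : ℕ} (h₁ : r₁ < q) (h₂ : r₂ < q)
    (h : r₁ * C ≡ r₂ * C [MOD q]) : r₁ = r₂ :=
  (Nat.ModEq.cancel_right_of_coprime (Nat.coprime_comm.1 hcop) h).eq_of_lt_of_lt h₁ h₂

theorem image_mul_mod_range (hcop : Nat.Coprime C q) :
    (range q).image (fun r => r * C % q) = range q := by
  refine eq_of_subset_of_card_le (fun n hn => ?_) ?_
  · obtain ⟨r, -, rfl⟩ := mem_image.1 hn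
    exact mem_range.2 (Nat.mod_lt _ (by grind))
  · rw [card_image_of_injOn fun r₁ h₁ r₂ h₂ h => eq_of_mul_modEq_mul hcop (mem_range.1 h₁)
      (mem_range.1 h₂) h]

theorem exists_modEq_mul (hcop : Nat.Coprime C q) (hq : 0 < q) (n : ℕ) :
    ∃ r < q, n ≡ r * C [MOD q] := by
  have hn : n % q ∈ (range q).image (fun r => r * C % q) := by
    rw [image_mul_mod_range hcop]; exact mem_range.2 (Nat.mod_lt n hq)
  obtain ⟨r, hr, hrn⟩ := mem_image.1 hn
  exact ⟨r, mem_range.1 hr, hrn.symm⟩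

/-- The remainders `rC % q`, `r < q`, run through `0, …, q - 1`. -/
theorem two_mul_sum_mul_div (hcop : Nat.Coprime C q) (hq : 0 < q) :
    2 * ((∑ r ∈ Icc 1 (q - 1), r * C / q : ℕ) : ℤ) = ((C : ℤ) - 1) * ((q : ℤ) - 1) := by
  rw [sum_subset (s₂ := range q) (fun r hr => mem_range.2 (by grind)) fun r _ hr => by
    rw [show r = 0 by grind, zero_mul, Nat.zero_div]]
  have hmod : ∑ r ∈ range q, r * C % q = ∑ r ∈ range q, r :=
    calc ∑ r ∈ range q, r * C % q = ∑ n ∈ (range q).image (· * C % q), n :=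
          (sum_image (f := id) fun r₁ h₁ r₂ h₂ h =>
            eq_of_mul_modEq_mul hcop (mem_range.1 h₁) (mem_range.1 h₂) h).symm
      _ = ∑ r ∈ range q, r := by rw [image_mul_mod_range hcop]
  have hdiv : q * ∑ r ∈ range q, r * C / q + ∑ r ∈ range q, r * C % q
      = C * ∑ r ∈ range q, r := by
    rw [mul_sum, mul_sum, ← sum_add_distrib]
    exact sum_congr rfl fun r _ => by rw [Nat.div_add_mod, mul_comm]
  rw [hmod] at hdiv
  generalize ∑ r ∈ range q, r * C / q = S at hdiv ⊢
  generalize hR : ∑ r ∈ range q, r = R at hdiv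
  have hgauss : R * 2 = q * (q - 1) := hR ▸ sum_range_id_mul_two q
  zify [hq] at hdiv hgauss
  refine mul_left_cancel₀ (Nat.cast_ne_zero.2 hq.ne' : (q : ℤ) ≠ 0) ?_
  linear_combination 2 * hdiv + ((C : ℤ) - 1) * hgauss

theorem card_filter_modEq (hq : 0 < q) {m v : ℕ} (h : m ≡ v [MOD q]) :
    #{n ∈ range m | n ≡ v [MOD q]} = m / q := by
  rw [← Nat.count_eq_card_filter_range, Nat.count_modEq_card m hq, h.symm, if_neg (lt_irrefl _),
    add_zero]

end Residues

section Quotient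

variable {p q b d k : ℕ}

theorem mul_mem_cnsSemigroup_mul_iff (hb : 2 ≤ b) (hcop : Nat.Coprime (p * q) d) (hp : 0 < p)
    {r n : ℕ} {x : ℕ → ℕ} (hr : r < q) (hx : IsGreedy b k x) (hxr : value b k x = r * p)
    (hn : n ≡ r * ((b - 1) * (p * q) + d) [MOD q]) :
    p * n ∈ cnsSemigroup (p * q) b d k ↔ r * ((b - 1) * (p * q) + d) + q * coordSum k x ≤ n := by
  have hN := Nat.ModEq.mul_left' p hn
  rw [← mul_assoc, mul_comm p r] at hN
  rw [mem_cnsSemigroup_iff hb hcop hx hxr (by nlinarith) hN]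
  rw [show r * p * ((b - 1) * (p * q) + d) + coordSum k x * (p * q)
    = p * (r * ((b - 1) * (p * q) + d) + q * coordSum k x) by ring]
  exact Nat.mul_le_mul_left_iff hp

theorem coprime_sub_one_mul_mul_add (hcop : Nat.Coprime (p * q) d) :
    Nat.Coprime ((b - 1) * (p * q) + d) q := by
  rw [← mul_assoc, Nat.coprime_mul_right_add_left]
  exact Nat.coprime_comm.1 hcop.coprime_mul_left

theorem gaps_eq_biUnion (hb : 2 ≤ b) (hcop : Nat.Coprime (p * q) d) (hp : 0 < p) (hq : 0 < q)
    {x : ℕ → ℕ → ℕ} (hx : ∀ r ∈ Icc 1 (q - 1), IsGreedy b k (x r) ∧ value b k (x r) = r * p) :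
    {n | 0 < n ∧ p * n ∉ cnsSemigroup (p * q) b d k} =
      ↑((Icc 1 (q - 1)).biUnion fun r =>
        {n ∈ range (r * ((b - 1) * (p * q) + d) + q * coordSum k (x r)) |
          n ≡ r * ((b - 1) * (p * q) + d) [MOD q]}) := by
  ext n
  simp only [Set.mem_ofPred_eq, coe_biUnion, Set.mem_iUnion, mem_coe, mem_filter, mem_range,
    exists_prop]
  constructor
  · rintro ⟨hn0, hnS⟩
    obtain ⟨r, hrq, hnr⟩ := exists_modEq_mul (coprime_sub_one_mul_mul_add hcop) hq n
    rcases Nat.eq_zero_or_pos r with rfl | hr0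
    · obtain ⟨t, rfl⟩ : q ∣ n := Nat.modEq_zero_iff_dvd.1 (by simpa using hnr)
      exact absurd (mul_assoc p q t ▸ mul_mem_cnsSemigroup t) hnS
    have hr : r ∈ Icc 1 (q - 1) := mem_Icc.2 ⟨hr0, by omega⟩
    refine ⟨r, hr, not_le.1 fun hle => hnS ?_, hnr⟩
    exact (mul_mem_cnsSemigroup_mul_iff hb hcop hp hrq (hx r hr).1 (hx r hr).2 hnr).2 hle
  · rintro ⟨r, hr, hn, hnr⟩
    have hnS : p * n ∉ cnsSemigroup (p * q) b d k := fun h => (not_le.2 hn)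
      ((mul_mem_cnsSemigroup_mul_iff hb hcop hp (by grind) (hx r hr).1 (hx r hr).2 hnr).1 h)
    refine ⟨Nat.pos_of_ne_zero ?_, hnS⟩
    rintro rfl
    exact hnS (by simpa using mul_mem_cnsSemigroup (a := p * q) (b := b) (d := d) (k := k) 0)

theorem ncard_gaps (hb : 2 ≤ b) (hcop : Nat.Coprime (p * q) d) (hp : 0 < p) (hq : 0 < q)
    {x : ℕ → ℕ → ℕ} (hx : ∀ r ∈ Icc 1 (q - 1), IsGreedy b k (x r) ∧ value b k (x r) = r * p) :
    {n | 0 < n ∧ p * n ∉ cnsSemigroup (p * q) b d k}.ncard =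
      ∑ r ∈ Icc 1 (q - 1), (r * ((b - 1) * (p * q) + d) / q + coordSum k (x r)) := by
  rw [gaps_eq_biUnion hb hcop hp hq hx, Set.ncard_coe_finset, card_biUnion]
  · refine sum_congr rfl fun r _ => ?_
    rw [card_filter_modEq hq (Nat.add_mul_mod_self_left _ _ _), Nat.add_mul_div_left _ _ hq]
  · intro r₁ h₁ r₂ h₂ hne
    refine disjoint_left.2 fun n hn₁ hn₂ => hne (eq_of_mul_modEq_mul (coprime_sub_one_mul_mul_add hcop)
      (by grind) (by grind) ((mem_filter.1 hn₁).2.symm.trans (mem_filter.1 hn₂).2))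

end Quotient

end CNS

theorem stmt_14_general (a k b d p : ℕ)
    (ha : 2 ≤ a) (hb : 2 ≤ b)
    (hgcd : Nat.gcd a d = 1)
    (hp : 0 < p) (hpa : p ∣ a)
    -- `x r` is the greedy presentation of `r * p` with respect to `B`,
    -- for each `1 ≤ r ≤ a/p - 1`
    (x : ℕ → ℕ → ℕ)
    (hxsum : ∀ r, 1 ≤ r → r ≤ a / p - 1 →
      ∑ i ∈ Finset.Icc 1 k, repunit b i * x r i = r * p)
    (hxle : ∀ r, 1 ≤ r → r ≤ a / p - 1 → ∀ i, 1 ≤ i → i ≤ k - 1 → x r i ≤ b)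
    (hxzero : ∀ r, 1 ≤ r → r ≤ a / p - 1 → ∀ i, 2 ≤ i → i ≤ k - 1 → x r i = b →
      ∀ j, 1 ≤ j → j < i → x r j = 0) :
    2 * (({n : ℕ | 0 < n ∧ ¬ ∃ y : ℕ → ℕ, p * n = y 0 * a +
          ∑ i ∈ Finset.Icc 1 k, y i * (b ^ i * a + repunit b i * d)}).ncard : ℤ)
      = 2 * (∑ r ∈ Finset.Icc 1 (a / p - 1),
          ((∑ i ∈ Finset.Icc 1 k, x r i : ℕ) : ℤ)) +
        (((b : ℤ) - 1) * a + d - 1) * (((a / p : ℕ) : ℤ) - 1) := by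
  obtain ⟨q, rfl⟩ := hpa
  have hq : 0 < q := Nat.pos_of_ne_zero (by rintro rfl; omega)
  rw [Nat.mul_div_cancel_left q hp] at hxsum hxle hxzero ⊢
  have hx (r : ℕ) (hr : r ∈ Finset.Icc 1 (q - 1)) :
      CNS.IsGreedy b k (x r) ∧ CNS.value b k (x r) = r * p := by
    obtain ⟨hr1, hrq⟩ := Finset.mem_Icc.1 hr
    exact ⟨⟨hxle r hr1 hrq, hxzero r hr1 hrq⟩, hxsum r hr1 hrq⟩
  change 2 * (({n | 0 < n ∧ p * n ∉ CNS.cnsSemigroup (p * q) b d k}).ncard : ℤ) = _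
  rw [CNS.ncard_gaps hb hgcd hp hq hx, Finset.sum_add_distrib, Nat.cast_add, mul_add,
    CNS.two_mul_sum_mul_div (CNS.coprime_sub_one_mul_mul_add hgcd) hq]
  push_cast [CNS.coordSum, Nat.cast_sub (show 1 ≤ b by omega)]
  ring

/-- genus of the quotient of a CNS numerical semigroup
`⟨a, ba + d, b²a + (b²−1)/(b−1)·d, …, bᵏa + (bᵏ−1)/(b−1)·d⟩` by a positive divisor
`p ≠ a` of `a`. If `a ≥ k − 1 − (d−1)/(b−1)`, then
`g(⟨A⟩/p) = Σ_{r=1}^{a/p−1} (Σ_i x_i)_{rp} + (((b−1)a + d − 1)/2)·(a/p − 1)`,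
where `(Σ_i x_i)_{rp}` is the coordinate sum of the greedy presentation of `r·p`.
(The identity is stated after multiplication by 2.) -/
theorem stmt_14 (a k b d p : ℕ)
    (ha : 2 ≤ a) (hk : 2 ≤ k) (hb : 2 ≤ b) (hd : 1 ≤ d)
    (hgcd : Nat.gcd a d = 1)
    (hp : 0 < p) (hpa : p ∣ a) (hpne : p ≠ a)
    (hcond : (k : ℚ) - 1 - ((d : ℚ) - 1) / ((b : ℚ) - 1) ≤ (a : ℚ))
    -- `x r` is the greedy presentation of `r * p` with respect to `B`,
    -- for each `1 ≤ r ≤ a/p - 1`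
    (x : ℕ → ℕ → ℕ)
    (hxsum : ∀ r, 1 ≤ r → r ≤ a / p - 1 →
      ∑ i ∈ Finset.Icc 1 k, repunit b i * x r i = r * p)
    (hxk : ∀ r, 1 ≤ r → r ≤ a / p - 1 → x r k = r * p / repunit b k)
    (hxle : ∀ r, 1 ≤ r → r ≤ a / p - 1 → ∀ i, 1 ≤ i → i ≤ k - 1 → x r i ≤ b)
    (hxzero : ∀ r, 1 ≤ r → r ≤ a / p - 1 → ∀ i, 2 ≤ i → i ≤ k - 1 → x r i = b →
      ∀ j, 1 ≤ j → j < i → x r j = 0) :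
    2 * (({n : ℕ | 0 < n ∧ ¬ ∃ y : ℕ → ℕ, p * n = y 0 * a +
          ∑ i ∈ Finset.Icc 1 k, y i * (b ^ i * a + repunit b i * d)}).ncard : ℤ)
      = 2 * (∑ r ∈ Finset.Icc 1 (a / p - 1),
          ((∑ i ∈ Finset.Icc 1 k, x r i : ℕ) : ℤ)) +
        (((b : ℤ) - 1) * a + d - 1) * (((a / p : ℕ) : ℤ) - 1) :=
  stmt_14_general a k b d p ha hb hgcd hp hpa x hxsum hxle hxzero
end
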